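/- arXiv:1305.6196 — 3 statements merged into one kernel-verified Lean document; each statement's English description precedes it below -/
import Mathlib

section
/- Let k ≥ 2 and d ≥ 2, and let B_{k,d} be the Bethe tree of k levels. Then its Wiener index satisfies W(B_{k,d}) = (d^k/(d-1)³)·[ (k-1)(d-1)(d^k + 1) - 2d(d^{k-1} - 1) ]. -/
/-!
In a tree rooted at `r`, the distance between `u` and `v` is the number of vertices that are an
ancestor of exactly one of them: these are the lower endpoints of the edges of the `u`–`v` path.
Summing over ordered pairs, each vertex `w` contributes `2 |T_w| (n - |T_w|)`, where `T_w` is the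
branch below `w`. In `B_{k,d}` the `d^i` vertices of level `i` carry branches of
`1 + d + ⋯ + d^(k-1-i)` vertices, and the resulting geometric sums give the closed form.
-/

open Finset

/-- The Wiener index of a graph: the sum of the distances over all unordered pairs of
vertices, i.e. half of the sum over all ordered pairs. -/
noncomputable def wienerIndex {V : Type*} [Fintype V] (G : SimpleGraph V) : ℕ :=
  (∑ u : V, ∑ v : V, G.dist u v) / 2

/-- `G` is a generalized Bethe tree of `k+1` levels with root `r` and degree sequence
`d 1, …, d k`: `G` is a tree; for `1 ≤ i ≤ k`, every vertex at distance `i-1` from `r` has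
exactly `d i` neighbors at distance `i` from `r`; every vertex is at distance at most `k`
from `r`; and every vertex at distance `k` from `r` is a pendent vertex. -/
def IsGeneralizedBetheTree {V : Type*} [Fintype V] (G : SimpleGraph V) [DecidableRel G.Adj]
    (r : V) (k : ℕ) (d : ℕ → ℕ) : Prop :=
  G.IsTree ∧
  (∀ i ∈ Finset.Icc 1 k, ∀ v : V, G.dist r v = i - 1 →
      ((G.neighborFinset v).filter (fun u => G.dist r u = i)).card = d i) ∧
  (∀ v : V, G.dist r v ≤ k) ∧
  (∀ v : V, G.dist r v = k → G.degree v = 1)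

open scoped symmDiff

lemma Finset.sum_card_filter_not_iff {α : Type*} [Fintype α] (p : α → Prop) [DecidablePred p] :
    ∑ a, #{b | ¬(p a ↔ p b)} = 2 * #{a | p a} * (Fintype.card α - #{a | p a}) := by
  have hcompl : #{b | ¬p b} = Fintype.card α - #{b | p b} := by
    have := card_filter_add_card_filter_not (s := univ) p
    rw [card_univ] at this
    exact Nat.eq_sub_of_add_eq' this
  have hinner : ∀ a, #{b | ¬(p a ↔ p b)} = if p a then #{b | ¬p b} else #{b | p b} := by
    intro a
    split_ifs with ha <;> simp [ha]
  simp_rw [hinner]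
  rw [sum_ite, sum_const, sum_const, smul_eq_mul, smul_eq_mul, hcompl]
  ring

theorem Finset.sum_sum_card_symmDiff {α β : Type*} [Fintype α] [Fintype β] [DecidableEq β]
    (f : α → Finset β) :
    ∑ a, ∑ b, #(f a ∆ f b) =
      ∑ x, 2 * #{a | x ∈ f a} * (Fintype.card α - #{a | x ∈ f a}) := by
  have hcard : ∀ a b, #(f a ∆ f b) = ∑ x, if ¬(x ∈ f a ↔ x ∈ f b) then 1 else 0 := by
    intro a b
    rw [← card_filter, ← filter_univ_mem (f a ∆ f b)]
    simp only [mem_symmDiff]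
    congr 2; ext x; tauto
  calc ∑ a, ∑ b, #(f a ∆ f b)
      = ∑ a, ∑ x, ∑ b, if ¬(x ∈ f a ↔ x ∈ f b) then 1 else 0 := by
        simp_rw [hcard]
        exact sum_congr rfl fun _ _ => sum_comm
    _ = ∑ x, ∑ a, ∑ b, if ¬(x ∈ f a ↔ x ∈ f b) then 1 else 0 := sum_comm
    _ = _ := by
        simp_rw [← card_filter]
        exact sum_congr rfl fun x _ => sum_card_filter_not_iff (x ∈ f ·)

namespace SimpleGraph

variable {V : Type*} {G : SimpleGraph V} {r u v p : V}

lemma Connected.exists_adj_dist_eq_of_dist_eq_add_one (hc : G.Connected) {m : ℕ}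
    (h : G.dist u v = m + 1) : ∃ q, G.Adj q v ∧ G.dist u q = m := by
  obtain ⟨w, hw⟩ := hc.exists_walk_length_eq_dist v u
  cases w with
  | nil => simp_all
  | @cons _ q _ hadj w' =>
    refine ⟨q, hadj.symm, ?_⟩
    have hle : G.dist q u ≤ w'.length := dist_le w'
    have htri : G.dist u v ≤ G.dist u q + G.dist q v := hc.dist_triangle
    rw [dist_eq_one_iff_adj.2 hadj.symm] at htri
    simp only [Walk.length_cons, dist_comm (u := v)] at hw
    rw [dist_comm] at hle
    omega

lemma IsTree.eq_of_adj_of_dist_add_one (hT : G.IsTree) {p' : V}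
    (h : G.Adj p v) (hp : G.dist r p + 1 = G.dist r v)
    (h' : G.Adj p' v) (hp' : G.dist r p' + 1 = G.dist r v) : p = p' := by
  obtain ⟨w, hw⟩ := hT.connected.exists_walk_length_eq_dist r p
  obtain ⟨w', hw'⟩ := hT.connected.exists_walk_length_eq_dist r p'
  have hpath := (w.concat h).isPath_of_length_eq_dist (by simp [hw, hp])
  have hpath' := (w'.concat h').isPath_of_length_eq_dist (by simp [hw', hp'])
  obtain ⟨hpp', -⟩ := Walk.concat_inj ((hT.existsUnique_path r v).unique hpath hpath')
  exact hpp'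

/-- The last step of a geodesic from `u` to `v` cannot come from a child `q` of `v`: by induction
on `dist u v`, `v` would then be the last step of a geodesic from `u` to `q`. -/
lemma IsTree.dist_eq_dist_add_one_of_parent (hT : G.IsTree) (h : G.Adj p v)
    (hp : G.dist r p + 1 = G.dist r v) (hne : u ≠ v) (hle : G.dist r u ≤ G.dist r v) :
    G.dist u v = G.dist u p + 1 := by
  obtain ⟨n, hn⟩ : ∃ n, G.dist u v = n := ⟨_, rfl⟩
  induction n generalizing v p with
  | zero => exact absurd (hT.connected.dist_eq_zero_iff.1 hn) hne
  | succ m ih =>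
    obtain ⟨q, hqv, hq⟩ := hT.connected.exists_adj_dist_eq_of_dist_eq_add_one hn
    rcases hT.dist_eq_dist_add_one_of_adj r hqv with hchild | hparent
    · have huq : u ≠ q := by rintro rfl; omega
      have := ih hqv.symm hchild.symm huq (by omega) hq
      omega
    · rw [← hT.eq_of_adj_of_dist_add_one hqv hparent.symm h hp]
      omega

lemma IsTree.exists_parent (hT : G.IsTree) (hv : v ≠ r) :
    ∃ p, G.Adj p v ∧ G.dist r p + 1 = G.dist r v := by
  obtain ⟨m, hm⟩ : ∃ m, G.dist r v = m + 1 :=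
    Nat.exists_eq_add_one.2 (hT.connected.pos_dist_of_ne hv.symm)
  obtain ⟨p, hpv, hp⟩ := hT.connected.exists_adj_dist_eq_of_dist_eq_add_one hm
  exact ⟨p, hpv, by omega⟩

variable [Fintype V]

/-- The vertices lying on a geodesic from `r` to `v`; in a tree rooted at `r` these are the
ancestors of `v`, including `v` itself. -/
noncomputable def ancestors (G : SimpleGraph V) (r v : V) : Finset V :=
  {w | G.dist r v = G.dist r w + G.dist w v}

noncomputable def descendants (G : SimpleGraph V) (r w : V) : Finset V :=
  {v | G.dist r v = G.dist r w + G.dist w v}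

noncomputable def children (G : SimpleGraph V) [DecidableRel G.Adj] (r v : V) : Finset V :=
  {u ∈ G.neighborFinset v | G.dist r u = G.dist r v + 1}

lemma mem_ancestors : u ∈ G.ancestors r v ↔ G.dist r v = G.dist r u + G.dist u v := by
  simp [ancestors]

lemma mem_descendants : v ∈ G.descendants r u ↔ u ∈ G.ancestors r v := by
  simp [descendants, ancestors]

lemma descendants_root : G.descendants r r = univ := by
  ext v
  simp [mem_descendants, mem_ancestors]

lemma IsTree.ancestors_eq_insert_of_parent [DecidableEq V] (hT : G.IsTree) (h : G.Adj p v)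
    (hp : G.dist r p + 1 = G.dist r v) : G.ancestors r v = insert v (G.ancestors r p) := by
  have hc := hT.connected
  ext w
  simp only [mem_insert, mem_ancestors]
  constructor
  · intro hw
    refine or_iff_not_imp_left.2 fun hwv => ?_
    obtain ⟨m, hm⟩ : ∃ m, G.dist w v = m + 1 :=
      Nat.exists_eq_add_one.2 (hc.pos_dist_of_ne hwv)
    obtain ⟨q, hqv, hq⟩ := hc.exists_adj_dist_eq_of_dist_eq_add_one hm
    have hrq : G.dist r q ≤ G.dist r w + G.dist w q := hc.dist_triangle
    have hrv : G.dist r v ≤ G.dist r q + G.dist q v := hc.dist_triangle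
    rw [dist_eq_one_iff_adj.2 hqv] at hrv
    obtain rfl := hT.eq_of_adj_of_dist_add_one hqv (by omega) h hp
    have hrp : G.dist r q ≤ G.dist r w + G.dist w q := hc.dist_triangle
    omega
  · rintro (rfl | hw)
    · simp
    · have hrv : G.dist r v ≤ G.dist r w + G.dist w v := hc.dist_triangle
      have hwv : G.dist w v ≤ G.dist w p + G.dist p v := hc.dist_triangle
      rw [dist_eq_one_iff_adj.2 h] at hwv
      omega

theorem IsTree.dist_eq_card_symmDiff_ancestors [DecidableEq V] (hT : G.IsTree) (r u v : V) :
    G.dist u v = #(G.ancestors r u ∆ G.ancestors r v) := by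
  have hc := hT.connected
  obtain ⟨n, hn⟩ : ∃ n, G.dist r u + G.dist r v = n := ⟨_, rfl⟩
  induction n using Nat.strong_induction_on generalizing u v with | _ n ih =>
  wlog hle : G.dist r u ≤ G.dist r v generalizing u v
  · rw [dist_comm, symmDiff_comm]
    exact this v u (by omega) (by omega)
  rcases eq_or_ne u v with rfl | hne
  · simp
  have hvr : v ≠ r := by
    rintro rfl
    exact hne (hc.dist_eq_zero_iff.1 (by simpa using hle)).symm
  obtain ⟨p, hpv, hp⟩ := hT.exists_parent hvr
  have hvu : v ∉ G.ancestors r u := by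
    rw [mem_ancestors]
    have := hc.pos_dist_of_ne hne.symm
    omega
  have hvp : v ∉ G.ancestors r p := by
    rw [mem_ancestors]
    omega
  have hsymm : G.ancestors r u ∆ G.ancestors r v =
      insert v (G.ancestors r u ∆ G.ancestors r p) := by
    rw [hT.ancestors_eq_insert_of_parent hpv hp]
    ext w
    simp only [mem_symmDiff, mem_insert]
    grind
  rw [hsymm, card_insert_of_notMem (by simp [mem_symmDiff, hvu, hvp]),
    hT.dist_eq_dist_add_one_of_parent hpv hp hne hle, ih _ (by omega) u p rfl]

theorem IsTree.sum_sum_dist_eq_sum_descendants [DecidableEq V] (hT : G.IsTree) (r : V) :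
    ∑ u, ∑ v, G.dist u v =
      ∑ w, 2 * #(G.descendants r w) * (Fintype.card V - #(G.descendants r w)) := by
  have hdesc : ∀ w, ({v | w ∈ G.ancestors r v} : Finset V) = G.descendants r w := fun w => by
    ext v
    simp [mem_descendants]
  simp_rw [hT.dist_eq_card_symmDiff_ancestors r, sum_sum_card_symmDiff, hdesc]

variable [DecidableRel G.Adj]

lemma mem_children : u ∈ G.children r v ↔ G.Adj v u ∧ G.dist r u = G.dist r v + 1 := by
  simp [children]

lemma IsTree.pairwiseDisjoint_children (hT : G.IsTree) (s : Set V) :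
    s.PairwiseDisjoint (G.children r) := by
  intro x _ y _ hxy
  rw [Function.onFun, Finset.disjoint_left]
  intro u hux huy
  rw [mem_children] at hux huy
  exact hxy <| hT.eq_of_adj_of_dist_add_one hux.1 hux.2.symm huy.1 huy.2.symm

lemma IsTree.filter_descendants_dist_add_one [DecidableEq V] (hT : G.IsTree) {w : V} {j : ℕ}
    (hw : G.dist r w ≤ j) :
    {u ∈ G.descendants r w | G.dist r u = j + 1} =
      {u ∈ G.descendants r w | G.dist r u = j}.biUnion (G.children r) := by
  ext u
  simp only [mem_filter, mem_biUnion, mem_children, mem_descendants]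
  constructor
  · rintro ⟨hwu, hu⟩
    have hur : u ≠ r := by rintro rfl; simp at hu
    obtain ⟨p, hpu, hp⟩ := hT.exists_parent hur
    rw [hT.ancestors_eq_insert_of_parent hpu hp, mem_insert] at hwu
    have hwu' : w ≠ u := by rintro rfl; omega
    exact ⟨p, ⟨hwu.resolve_left hwu', by omega⟩, hpu, by omega⟩
  · rintro ⟨p, ⟨hwp, hp⟩, hpu, hu⟩
    rw [hT.ancestors_eq_insert_of_parent hpu hu.symm]
    exact ⟨mem_insert_of_mem hwp, by omega⟩

end SimpleGraph

namespace IsGeneralizedBetheTree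

open SimpleGraph

/-- In a generalized Bethe tree with levels `0, …, K`, a vertex of level `i` has
`∏ j ∈ range t, d (i + j + 1)` descendants `t` levels below it. -/
def branchCard (K : ℕ) (d : ℕ → ℕ) (i : ℕ) : ℕ :=
  ∑ t ∈ range (K + 1 - i), ∏ j ∈ range t, d (i + j + 1)

variable {V : Type*} [Fintype V] {G : SimpleGraph V} [DecidableRel G.Adj]
  {r w : V} {K i : ℕ} {d : ℕ → ℕ}

lemma card_children (hG : IsGeneralizedBetheTree G r K d) {v : V} (hv : G.dist r v < K) :
    #(G.children r v) = d (G.dist r v + 1) :=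
  hG.2.1 _ (mem_Icc.2 ⟨le_add_self, hv⟩) v (Nat.add_sub_cancel _ _).symm

variable [DecidableEq V]

lemma card_filter_descendants_dist (hG : IsGeneralizedBetheTree G r K d) (hw : G.dist r w = i)
    {t : ℕ} (ht : i + t ≤ K) :
    #{u ∈ G.descendants r w | G.dist r u = i + t} = ∏ j ∈ range t, d (i + j + 1) := by
  induction t with
  | zero =>
    rw [prod_range_zero, card_eq_one]
    refine ⟨w, eq_singleton_iff_unique_mem.2 ⟨by simp [mem_descendants, mem_ancestors, hw], ?_⟩⟩
    intro u hu
    simp only [mem_filter, mem_descendants, mem_ancestors] at hu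
    exact (hG.1.connected.dist_eq_zero_iff.1 (by omega)).symm
  | succ t ih =>
    have hlevel : ∀ v ∈ {u ∈ G.descendants r w | G.dist r u = i + t},
        #(G.children r v) = d (i + t + 1) := fun v hv => by
      obtain ⟨-, hv⟩ := mem_filter.1 hv
      rw [← hv]
      exact hG.card_children (by omega)
    rw [← add_assoc, hG.1.filter_descendants_dist_add_one (by omega),
      card_biUnion (hG.1.pairwiseDisjoint_children _), sum_congr rfl hlevel, sum_const,
      ih (by omega), prod_range_succ, smul_eq_mul]

lemma card_descendants (hG : IsGeneralizedBetheTree G r K d) (hw : G.dist r w = i)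
    (hi : i ≤ K) :
    #(G.descendants r w) = branchCard K d i := by
  have hmaps : ∀ u ∈ G.descendants r w, G.dist r u ∈ Ico i (K + 1) := fun u hu => by
    rw [mem_descendants, mem_ancestors] at hu
    exact mem_Ico.2 ⟨by omega, Nat.lt_succ_of_le (hG.2.2.1 u)⟩
  rw [card_eq_sum_card_fiberwise hmaps, sum_Ico_eq_sum_range, branchCard]
  exact sum_congr rfl fun t ht => hG.card_filter_descendants_dist hw (by simp at ht; omega)

lemma card_eq_branchCard_zero (hG : IsGeneralizedBetheTree G r K d) :
    Fintype.card V = branchCard K d 0 := by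
  rw [← card_univ, ← descendants_root (G := G) (r := r)]
  exact hG.card_descendants SimpleGraph.dist_self (Nat.zero_le _)

lemma card_filter_dist (hG : IsGeneralizedBetheTree G r K d) (hi : i ≤ K) :
    #{v | G.dist r v = i} = ∏ j ∈ range i, d (j + 1) := by
  simpa [descendants_root] using
    hG.card_filter_descendants_dist (w := r) SimpleGraph.dist_self (t := i) (by omega)

theorem sum_sum_dist (hG : IsGeneralizedBetheTree G r K d) :
    ∑ u, ∑ v, G.dist u v = ∑ i ∈ range (K + 1),
      (∏ j ∈ range i, d (j + 1)) *
        (2 * branchCard K d i * (branchCard K d 0 - branchCard K d i)) := by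
  have hmaps : ∀ w ∈ (univ : Finset V), G.dist r w ∈ range (K + 1) :=
    fun w _ => mem_range.2 (Nat.lt_succ_of_le (hG.2.2.1 w))
  rw [hG.1.sum_sum_dist_eq_sum_descendants r, ← sum_fiberwise_of_maps_to hmaps]
  refine sum_congr rfl fun i hi => ?_
  have hiK : i ≤ K := Nat.le_of_lt_succ (mem_range.1 hi)
  have hlevel : ∀ w ∈ ({w | G.dist r w = i} : Finset V),
      2 * #(G.descendants r w) * (Fintype.card V - #(G.descendants r w)) =
        2 * branchCard K d i * (branchCard K d 0 - branchCard K d i) := fun w hw => by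
    rw [hG.card_descendants (mem_filter.1 hw).2 hiK, hG.card_eq_branchCard_zero]
  rw [sum_congr rfl hlevel, sum_const, hG.card_filter_dist hiK, smul_eq_mul]

theorem wienerIndex_eq (hG : IsGeneralizedBetheTree G r K d) :
    wienerIndex G = ∑ i ∈ range (K + 1),
      (∏ j ∈ range i, d (j + 1)) * (branchCard K d i * (branchCard K d 0 - branchCard K d i)) := by
  rw [wienerIndex, hG.sum_sum_dist]
  simp_rw [mul_assoc 2, mul_left_comm _ 2, ← mul_sum, Nat.mul_div_cancel_left _ two_pos]

end IsGeneralizedBetheTree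

theorem sum_range_pow_mul_geom_sum_mul_sub {𝕜 : Type*} [Field 𝕜] {q : 𝕜} (hq : q ≠ 1) (K : ℕ) :
    ∑ i ∈ range (K + 1), q ^ i * ((∑ t ∈ range (K + 1 - i), q ^ t) *
      (∑ t ∈ range (K + 1), q ^ t - ∑ t ∈ range (K + 1 - i), q ^ t)) =
    q ^ (K + 1) / (q - 1) ^ 3 * (K * (q - 1) * (q ^ (K + 1) + 1) - 2 * q * (q ^ K - 1)) := by
  have hterm : ∀ i ∈ range (K + 1), q ^ i * ((∑ t ∈ range (K + 1 - i), q ^ t) *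
      (∑ t ∈ range (K + 1), q ^ t - ∑ t ∈ range (K + 1 - i), q ^ t)) =
      q ^ (K + 1) * (q ^ (K + 1) + 1 - q ^ (K + 1 - i) - q ^ i) / (q - 1) ^ 2 := by
    intro i hi
    have hsplit : q ^ (K + 1) = q ^ i * q ^ (K + 1 - i) := by
      rw [← pow_add, Nat.add_sub_cancel' (mem_range.1 hi).le]
    rw [geom_sum_eq hq, geom_sum_eq hq, hsplit]
    field_simp
    ring
  have hreflect : ∑ i ∈ range (K + 1), q ^ (K + 1 - i) = q * ∑ i ∈ range (K + 1), q ^ i := by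
    rw [mul_sum, ← sum_range_reflect]
    exact sum_congr rfl fun i hi => by
      rw [← pow_succ']
      congr 1
      have := mem_range.1 hi
      omega
  rw [sum_congr rfl hterm, ← sum_div, ← mul_sum, sum_sub_distrib, sum_sub_distrib, sum_const,
    card_range, hreflect, geom_sum_eq hq, pow_succ]
  field_simp
  ring

/-- Wiener index of the Bethe tree `B_{k,d}` of `k` levels (the generalized Bethe tree of `k`
levels with constant degree sequence `dᵢ = d` for `1 ≤ i ≤ k-1`):
`W(B_{k,d}) = d^k/(d-1)³ · [ (k-1)(d-1)(d^k + 1) - 2 d (d^{k-1} - 1) ]`. -/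
theorem wiener_index_betheTree {V : Type*} [Fintype V] (G : SimpleGraph V)
    [DecidableRel G.Adj] (r : V) (k d : ℕ) (hk : 2 ≤ k) (hd : 2 ≤ d)
    (hG : IsGeneralizedBetheTree G r (k - 1) (fun _ => d)) :
    (wienerIndex G : ℚ) =
      (d : ℚ) ^ k / ((d : ℚ) - 1) ^ 3 *
        (((k : ℚ) - 1) * ((d : ℚ) - 1) * ((d : ℚ) ^ k + 1)
          - 2 * (d : ℚ) * ((d : ℚ) ^ (k - 1) - 1)) := by
  classical
  obtain ⟨K, rfl⟩ : ∃ K, k = K + 1 := ⟨k - 1, by omega⟩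
  rw [Nat.add_sub_cancel] at hG ⊢
  have hd1 : (d : ℚ) ≠ 1 := by exact_mod_cast (by omega : d ≠ 1)
  have hbranch : ∀ i, IsGeneralizedBetheTree.branchCard K (fun _ => d) i =
      ∑ t ∈ range (K + 1 - i), d ^ t := fun i => by
    simp [IsGeneralizedBetheTree.branchCard]
  have hbranch_le : ∀ i, ∑ t ∈ range (K + 1 - i), d ^ t ≤ ∑ t ∈ range (K + 1), d ^ t :=
    fun i => sum_le_sum_of_subset (range_subset_range.2 (Nat.sub_le _ _))
  rw [hG.wienerIndex_eq]
  simp only [hbranch, prod_const, card_range, Nat.sub_zero]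
  push_cast [Nat.cast_sub (hbranch_le _)]
  rw [sum_range_pow_mul_geom_sum_mul_sub hd1]
  ring
end

section
/- Let T be a starlike tree on n vertices with maximum degree Δ ≥ 3, i.e., exactly one vertex of T has degree greater than 2, and that vertex has degree Δ. Then TW(T) = (n-1)(Δ-1). -/
/-!
Root `T` at its unique branching vertex `c`. Every other vertex has degree at most two, hence at
most one child, so `T - c` splits into legs: every vertex `v ≠ c` lies on the geodesic from `c`
to exactly one leaf. Consequently two distinct leaves `u, v` are at distance `d(u,c) + d(c,v)`,
the distances from `c` to the leaves add up to `n - 1`, and the handshake lemma shows that there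
are `Δ` leaves. Summing `d(u,c) + d(c,v)` over ordered pairs of distinct leaves gives
`2 (Δ - 1)(n - 1)`.
-/

open Finset

/-- The pendent vertices of a graph: the vertices of degree 1. -/
def pendentFinset {V : Type*} [Fintype V] (G : SimpleGraph V) [DecidableRel G.Adj] : Finset V :=
  univ.filter (fun v => G.degree v = 1)

/-- The terminal Wiener index of a graph: the sum of the distances over all unordered pairs of
pendent vertices, i.e. half of the sum over all ordered pairs of pendent vertices. -/
noncomputable def terminalWienerIndex {V : Type*} [Fintype V] (G : SimpleGraph V)
    [DecidableRel G.Adj] : ℕ :=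
  (∑ u ∈ pendentFinset G, ∑ v ∈ pendentFinset G, G.dist u v) / 2

lemma Finset.sum_sum_eq_two_mul_card_sub_one_mul_sum {ι : Type*} (s : Finset ι)
    {d : ι → ι → ℕ} {f : ι → ℕ}
    (hd : ∀ i ∈ s, d i i = 0) (hne : ∀ i ∈ s, ∀ j ∈ s, i ≠ j → d i j = f i + f j) :
    ∑ i ∈ s, ∑ j ∈ s, d i j = 2 * ((#s - 1) * ∑ i ∈ s, f i) := by
  classical
  have hrow : ∀ i ∈ s, ∑ j ∈ s, d i j + 2 * f i = ∑ j ∈ s, (f i + f j) := by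
    intro i hi
    rw [← add_sum_erase s _ hi, ← add_sum_erase s (fun j => f i + f j) hi, hd i hi,
      sum_congr rfl fun j hj => hne i hi j (mem_of_mem_erase hj) (ne_of_mem_erase hj).symm]
    ring
  have htot := sum_congr rfl hrow
  simp only [sum_add_distrib, sum_const, smul_eq_mul, ← mul_sum] at htot
  rw [Nat.sub_mul, one_mul]
  omega

@[simp]
lemma mem_pendentFinset {V : Type*} [Fintype V] {G : SimpleGraph V} [DecidableRel G.Adj] {v : V} :
    v ∈ pendentFinset G ↔ G.degree v = 1 := by
  simp [pendentFinset]

namespace SimpleGraph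

variable {V : Type*} {G : SimpleGraph V} {r u v w x y : V}

lemma Reachable.exists_adj_dist_add_one_eq (h : G.Reachable u v) (huv : u ≠ v) :
    ∃ x, G.Adj u x ∧ G.dist x v + 1 = G.dist u v := by
  obtain ⟨p, hp⟩ := h.exists_walk_length_eq_dist
  obtain ⟨x, hx, q, rfl⟩ := Walk.exists_eq_cons_of_ne huv p
  refine ⟨x, hx, le_antisymm ?_ ?_⟩
  · simpa [← hp] using dist_le q
  · simpa [G.dist_eq_one_iff_adj.mpr hx, add_comm] using q.reachable.dist_triangle_right u

lemma IsAcyclic.length_eq_dist_of_isPath (hG : G.IsAcyclic) {p : G.Walk u v} (hp : p.IsPath) :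
    p.length = G.dist u v := by
  obtain ⟨q, hq, hlen⟩ := p.reachable.exists_path_of_dist
  rw [← hlen, Subtype.mk.inj <| hG.subsingleton_path u v |>.elim ⟨p, hp⟩ ⟨q, hq⟩]

lemma IsTree.mem_support_iff_dist_add_dist_eq (hG : G.IsTree) {p : G.Walk u v} (hp : p.IsPath) :
    w ∈ p.support ↔ G.dist u w + G.dist w v = G.dist u v := by
  classical
  constructor
  · intro hw
    rw [← hG.isAcyclic.length_eq_dist_of_isPath (hp.takeUntil hw),
      ← hG.isAcyclic.length_eq_dist_of_isPath (hp.dropUntil hw),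
      ← hG.isAcyclic.length_eq_dist_of_isPath hp, ← Walk.length_append, p.take_spec hw]
  · intro hw
    obtain ⟨q₁, hq₁⟩ := hG.connected.exists_walk_length_eq_dist u w
    obtain ⟨q₂, hq₂⟩ := hG.connected.exists_walk_length_eq_dist w v
    have hq : (q₁.append q₂).IsPath := (q₁.append q₂).isPath_of_length_eq_dist (by simp [*])
    rw [Subtype.mk.inj <| hG.isAcyclic.subsingleton_path u v |>.elim ⟨p, hp⟩ ⟨_, hq⟩]
    simp

lemma IsAcyclic.eq_of_adj_of_dist_add_one_eq (hG : G.IsAcyclic) (hx : G.Adj x v)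
    (hy : G.Adj y v) (hxd : G.dist r x + 1 = G.dist r v) (hyd : G.dist r y + 1 = G.dist r v) :
    x = y := by
  have hr : G.Reachable r v := Reachable.of_dist_ne_zero (by omega)
  obtain ⟨p, hp⟩ := (hr.trans hx.symm.reachable).exists_walk_length_eq_dist
  obtain ⟨q, hq⟩ := (hr.trans hy.symm.reachable).exists_walk_length_eq_dist
  have hpx : (p.concat hx).IsPath := (p.concat hx).isPath_of_length_eq_dist (by simp [*])
  have hqy : (q.concat hy).IsPath := (q.concat hy).isPath_of_length_eq_dist (by simp [*])
  have := Subtype.mk.inj <| hG.subsingleton_path r v |>.elim ⟨_, hpx⟩ ⟨_, hqy⟩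
  simpa using congrArg Walk.penultimate this

lemma IsTree.card_filter_dist_add_dist_eq [Fintype V] (hG : G.IsTree) (u v : V) :
    #{w | G.dist u w + G.dist w v = G.dist u v} = G.dist u v + 1 := by
  classical
  obtain ⟨p, hp, hlen⟩ := hG.connected.exists_path_of_dist u v
  have : ({w | G.dist u w + G.dist w v = G.dist u v} : Finset V) = p.support.toFinset := by
    ext w
    simp [hG.mem_support_iff_dist_add_dist_eq hp]
  rw [this, List.toFinset_card_of_nodup hp.support_nodup, Walk.length_support, hlen]

section Rooted

variable [Fintype V] [DecidableRel G.Adj]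

noncomputable def childFinset (G : SimpleGraph V) [DecidableRel G.Adj] (r v : V) : Finset V :=
  {w ∈ G.neighborFinset v | G.dist r w = G.dist r v + 1}

@[simp]
lemma mem_childFinset : w ∈ G.childFinset r v ↔ G.Adj v w ∧ G.dist r w = G.dist r v + 1 := by
  simp [childFinset]

lemma IsTree.card_childFinset_add_one (hG : G.IsTree) (hv : v ≠ r) :
    #(G.childFinset r v) + 1 = G.degree v := by
  classical
  obtain ⟨x, hx, hxd⟩ := (hG.connected v r).exists_adj_dist_add_one_eq hv
  rw [dist_comm, dist_comm (u := v)] at hxd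
  have hnbr : G.neighborFinset v = insert x (G.childFinset r v) := by
    ext y
    simp only [mem_insert, mem_childFinset, mem_neighborFinset]
    constructor
    · intro hy
      rcases hG.dist_eq_dist_add_one_of_adj r hy with h | h
      · exact .inl (hG.isAcyclic.eq_of_adj_of_dist_add_one_eq hy.symm hx.symm h.symm hxd)
      · exact .inr ⟨hy, h⟩
    · rintro (rfl | ⟨hy, -⟩) <;> assumption
  rw [← card_neighborFinset_eq_degree, hnbr, card_insert_of_notMem]
  simp only [mem_childFinset, not_and]
  omega

lemma Connected.exists_mem_childFinset (hG : G.Connected)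
    (hw : G.dist r v + G.dist v w = G.dist r w) (hvw : v ≠ w) :
    ∃ y ∈ G.childFinset r v,
      G.dist r y + G.dist y w = G.dist r w ∧ G.dist y w < G.dist v w := by
  obtain ⟨y, hy, hyd⟩ := (hG v w).exists_adj_dist_add_one_eq hvw
  have h₁ : G.dist r y ≤ G.dist r v + 1 := by
    simpa [G.dist_eq_one_iff_adj.mpr hy] using
      (hG.dist_triangle : G.dist r y ≤ G.dist r v + G.dist v y)
  have h₂ : G.dist r w ≤ G.dist r y + G.dist y w := hG.dist_triangle
  exact ⟨y, mem_childFinset.mpr ⟨hy, by omega⟩, by omega, by omega⟩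

lemma IsTree.eq_of_degree_eq_one_of_dist_add_dist_eq (hG : G.IsTree) (hv : v ≠ r)
    (hdeg : G.degree v = 1) (hw : G.dist r v + G.dist v w = G.dist r w) : v = w := by
  by_contra hvw
  obtain ⟨y, hy, -⟩ := hG.connected.exists_mem_childFinset hw hvw
  have := hG.card_childFinset_add_one hv
  have := card_pos.mpr ⟨y, hy⟩
  omega

/-- A vertex farthest from `r` among those whose geodesic from `r` passes through `v` has no
child, so it is a leaf. -/
lemma IsTree.exists_degree_eq_one_dist_add_dist_eq (hG : G.IsTree) (hv : v ≠ r) :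
    ∃ u, G.degree u = 1 ∧ G.dist r v + G.dist v u = G.dist r u := by
  obtain ⟨w, hw, hmax⟩ := exists_max_image {w | G.dist r v + G.dist v w = G.dist r w}
    (G.dist r) ⟨v, by simp⟩
  simp only [mem_filter, mem_univ, true_and] at hw hmax
  have hwr : w ≠ r := by
    intro h
    rw [h, dist_self, dist_comm] at hw
    exact hv (hG.connected.dist_eq_zero_iff.mp (by omega))
  refine ⟨w, ?_, hw⟩
  by_contra hdeg
  have hpos := (hG.connected w r).degree_pos_left hwr
  obtain ⟨x, hx⟩ : (G.childFinset r w).Nonempty := by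
    have := hG.card_childFinset_add_one hwr
    exact card_pos.mp (by omega)
  rw [mem_childFinset] at hx
  have h₁ : G.dist v x ≤ G.dist v w + 1 := by
    simpa [G.dist_eq_one_iff_adj.mpr hx.1] using
      (hG.connected.dist_triangle : G.dist v x ≤ G.dist v w + G.dist w x)
  have h₂ : G.dist r x ≤ G.dist r v + G.dist v x := hG.connected.dist_triangle
  have := hmax x (by omega)
  omega

/-- Descend from `v` towards `u₁` and `u₂` at the same time: below the root a vertex of degree at
most two has at most one child, so both descents take the same steps. -/
lemma IsTree.eq_of_dist_add_dist_eq_of_degree_le_two (hG : G.IsTree)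
    (hdeg : ∀ v ≠ r, G.degree v ≤ 2) {v u₁ u₂ : V} (hu₁ : G.degree u₁ = 1)
    (hu₂ : G.degree u₂ = 1) (hv : v ≠ r) (h₁ : G.dist r v + G.dist v u₁ = G.dist r u₁)
    (h₂ : G.dist r v + G.dist v u₂ = G.dist r u₂) : u₁ = u₂ := by
  obtain rfl | hvu₁ := eq_or_ne v u₁
  · exact hG.eq_of_degree_eq_one_of_dist_add_dist_eq hv hu₁ h₂
  obtain rfl | hvu₂ := eq_or_ne v u₂
  · exact (hvu₁ (hG.eq_of_degree_eq_one_of_dist_add_dist_eq hv hu₂ h₁)).elim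
  obtain ⟨y, hy, h₁', hlt⟩ := hG.connected.exists_mem_childFinset h₁ hvu₁
  obtain ⟨y', hy', h₂', -⟩ := hG.connected.exists_mem_childFinset h₂ hvu₂
  obtain rfl : y = y' := by
    have := hG.card_childFinset_add_one hv
    exact card_le_one.mp (by have := hdeg v hv; omega) _ hy _ hy'
  have hyr : y ≠ r := by
    rintro rfl
    simp at hy
  exact hG.eq_of_dist_add_dist_eq_of_degree_le_two hdeg hu₁ hu₂ hyr h₁' h₂'
termination_by G.dist v u₁

lemma IsTree.dist_eq_dist_add_dist_of_degree_le_two (hG : G.IsTree)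
    (hdeg : ∀ v ≠ r, G.degree v ≤ 2) {u₁ u₂ : V} (hu₁ : G.degree u₁ = 1)
    (hu₂ : G.degree u₂ = 1) (hne : u₁ ≠ u₂) : G.dist u₁ u₂ = G.dist u₁ r + G.dist r u₂ := by
  obtain ⟨p, hp, hpl⟩ := hG.connected.exists_path_of_dist r u₁
  obtain ⟨q, hq, hql⟩ := hG.connected.exists_path_of_dist r u₂
  have hr : r ∉ q.support.tail := by
    have := hq.support_nodup
    rw [← Walk.cons_tail_support, List.nodup_cons] at this
    exact this.1
  have hpath : (p.reverse.append q).IsPath := by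
    rw [Walk.isPath_def, Walk.support_append, Walk.support_reverse, List.nodup_append']
    refine ⟨List.nodup_reverse.mpr hp.support_nodup,
      hq.support_nodup.sublist q.support.tail_sublist, fun w hw₁ hw₂ => ?_⟩
    refine hne (hG.eq_of_dist_add_dist_eq_of_degree_le_two hdeg hu₁ hu₂
      (ne_of_mem_of_not_mem hw₂ hr)
      ((hG.mem_support_iff_dist_add_dist_eq hp).mp (List.mem_reverse.mp hw₁))
      ((hG.mem_support_iff_dist_add_dist_eq hq).mp (List.mem_of_mem_tail hw₂)))
  rw [← hG.isAcyclic.length_eq_dist_of_isPath hpath, Walk.length_append, Walk.length_reverse,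
    hpl, hql, dist_comm]

lemma IsTree.sum_dist_pendentFinset (hG : G.IsTree) (hdeg : ∀ v ≠ r, G.degree v ≤ 2) :
    ∑ u ∈ pendentFinset G, G.dist r u = Fintype.card V - 1 := by
  classical
  let leg (u : V) : Finset V := ({w | G.dist r w + G.dist w u = G.dist r u} : Finset V).erase r
  have hcard (u : V) : #(leg u) = G.dist r u := by
    rw [card_erase_of_mem (by simp), hG.card_filter_dist_add_dist_eq, Nat.add_sub_cancel]
  have hcover : (pendentFinset G).biUnion leg = univ.erase r := by
    ext v
    simp only [leg, mem_biUnion, mem_erase, mem_filter, mem_univ, true_and, and_true,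
      mem_pendentFinset]
    constructor
    · rintro ⟨u, -, hv, -⟩
      exact hv
    · intro hv
      obtain ⟨u, hu, h⟩ := hG.exists_degree_eq_one_dist_add_dist_eq hv
      exact ⟨u, hu, hv, h⟩
  have hdisj : (pendentFinset G : Set V).PairwiseDisjoint leg := by
    intro u₁ hu₁ u₂ hu₂ hne
    refine Finset.disjoint_left.mpr fun v hv₁ hv₂ => hne ?_
    simp only [leg, mem_erase, mem_filter, mem_univ, true_and] at hv₁ hv₂
    simp only [mem_coe, mem_pendentFinset] at hu₁ hu₂
    exact hG.eq_of_dist_add_dist_eq_of_degree_le_two hdeg hu₁ hu₂ hv₁.1 hv₁.2 hv₂.2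
  calc ∑ u ∈ pendentFinset G, G.dist r u = ∑ u ∈ pendentFinset G, #(leg u) := by simp [hcard]
    _ = #(univ.erase r) := by rw [← card_biUnion hdisj, hcover]
    _ = Fintype.card V - 1 := by simp

lemma IsTree.card_pendentFinset (hG : G.IsTree) (hdeg : ∀ v ≠ r, G.degree v ≤ 2)
    (hr : G.degree r ≠ 1) : #(pendentFinset G) = G.degree r := by
  classical
  have hsum : ∑ v, (G.degree v : ℤ) = 2 * (Fintype.card V - 1) := by
    have := hG.card_edgeFinset
    rw [← Nat.cast_sum, sum_degrees_eq_twice_card_edges]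
    push_cast
    omega
  -- In `∑ (deg v - 2) = -2`, only `r` and the leaves have a nonzero term.
  have hterm (v : V) : (G.degree v : ℤ) =
      2 + (if v = r then (G.degree r : ℤ) - 2 else 0) - (if v ∈ pendentFinset G then 1 else 0) := by
    obtain rfl | hv := eq_or_ne v r
    · simp [hr]
    · have := hdeg v hv
      have := (hG.connected v r).degree_pos_left hv
      by_cases h : G.degree v = 1 <;> simp [hv, h]
      omega
  rw [sum_congr rfl fun v _ => hterm v] at hsum
  simp only [sum_sub_distrib, sum_add_distrib, sum_ite_eq', sum_boole, sum_const,
    mem_univ, if_true, card_univ, nsmul_eq_mul, filter_mem_eq_inter, univ_inter] at hsum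
  have : 0 < Fintype.card V := Fintype.card_pos_iff.mpr ⟨r⟩
  omega

lemma IsTree.terminalWienerIndex_eq (hG : G.IsTree) (hdeg : ∀ v ≠ r, G.degree v ≤ 2)
    (hr : G.degree r ≠ 1) :
    terminalWienerIndex G = (Fintype.card V - 1) * (G.degree r - 1) := by
  have hsum := (pendentFinset G).sum_sum_eq_two_mul_card_sub_one_mul_sum
    (fun _ _ => dist_self) fun u hu v hv huv => by
      rw [mem_pendentFinset] at hu hv
      rw [hG.dist_eq_dist_add_dist_of_degree_le_two hdeg hu hv huv, dist_comm]
  rw [terminalWienerIndex, hsum, hG.sum_dist_pendentFinset hdeg, hG.card_pendentFinset hdeg hr,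
    Nat.mul_div_cancel_left _ two_pos, mul_comm]

end Rooted

end SimpleGraph

theorem terminal_wiener_index_starlike_general {V : Type*} [Fintype V] (T : SimpleGraph V)
    [DecidableRel T.Adj] (hT : T.IsTree)
    (hstar : ∃! v : V, 2 < T.degree v) :
    terminalWienerIndex T = (Fintype.card V - 1) * (T.maxDegree - 1) := by
  obtain ⟨c, hc, huniq⟩ := hstar
  have hdeg : ∀ v ≠ c, T.degree v ≤ 2 := fun v hv => not_lt.mp (hv ∘ huniq v)
  have hmax : T.maxDegree = T.degree c := by
    refine le_antisymm (T.maxDegree_le_of_forall_degree_le _ fun v => ?_)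
      (T.degree_le_maxDegree c)
    obtain rfl | hv := eq_or_ne v c
    · rfl
    · exact (hdeg v hv).trans hc.le
  rw [hmax, hT.terminalWienerIndex_eq hdeg (by omega)]

/-- If `T` is a starlike tree on `n` vertices with maximum degree `Δ ≥ 3` (i.e. exactly one
vertex of `T` has degree greater than 2, and that vertex has degree `Δ`), then
`TW(T) = (n - 1)(Δ - 1)`. -/
theorem terminal_wiener_index_starlike {V : Type*} [Fintype V] (T : SimpleGraph V)
    [DecidableRel T.Adj] (hT : T.IsTree) (hΔ : 3 ≤ T.maxDegree)
    (hstar : ∃! v : V, 2 < T.degree v) :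
    terminalWienerIndex T = (Fintype.card V - 1) * (T.maxDegree - 1) :=
  terminal_wiener_index_starlike_general T hT hstar
end

section
/- Let T be a tree on n vertices with maximum degree Δ ≥ 3 such that TW(T) = (n-1)(Δ-1). Then T is starlike, i.e., exactly one vertex of T has degree greater than 2 (and that vertex has degree Δ). -/
open Finset

/-!
Each edge `e` of a tree splits the pendent vertices into the two sides of `e`, and both sides
contain a leaf. Since the distance between two vertices is the number of edges separating them,
`2 TW(T) = ∑ₑ 2 |Aₑ| |Bₑ| ≥ 2 (n - 1) (p - 1)`, where `p` is the number of pendent vertices.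
On the other hand the handshake identity `∑ᵥ (deg v - 2) = -2` shows that a tree with two
vertices of degree at least 3, one of them of degree `Δ`, has at least `Δ + 1` pendent vertices,
so then `TW(T) ≥ (n - 1) Δ`.
-/

namespace SimpleGraph

variable {V : Type*} {G : SimpleGraph V}

lemma IsAcyclic.not_reachable_deleteEdges_of_adj (hG : G.IsAcyclic) {a b : V} (hab : G.Adj a b) :
    ¬ (G.deleteEdges {s(a, b)}).Reachable a b :=
  isAcyclic_iff_forall_adj_isBridge.mp hG hab

lemma IsTree.reachable_deleteEdges_iff_not_reachable (hT : G.IsTree) {a b : V} (hab : G.Adj a b)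
    (x : V) :
    (G.deleteEdges {s(a, b)}).Reachable a x ↔ ¬ (G.deleteEdges {s(a, b)}).Reachable b x := by
  refine ⟨fun hax hbx ↦ hT.isAcyclic.not_reachable_deleteEdges_of_adj hab (hax.trans hbx.symm),
    fun hbx ↦ ?_⟩
  obtain ⟨p, hp⟩ := hT.connected.exists_isPath a x
  exact (p.toDeleteEdge _ <| hp.isTrail.not_mem_edges_of_not_reachable
    (hT.isAcyclic.not_reachable_deleteEdges_of_adj hab) fun hxb ↦ hbx hxb.symm).reachable

lemma IsTree.reachable_deleteEdges_iff (hT : G.IsTree) {a b : V} (hab : G.Adj a b) (u w : V) :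
    (G.deleteEdges {s(a, b)}).Reachable u w ↔
      ((G.deleteEdges {s(a, b)}).Reachable a u ↔ (G.deleteEdges {s(a, b)}).Reachable a w) := by
  refine ⟨fun huw ↦ ⟨(·.trans huw), (·.trans huw.symm)⟩, fun h ↦ ?_⟩
  by_cases hau : (G.deleteEdges {s(a, b)}).Reachable a u
  · exact hau.symm.trans (h.mp hau)
  · have hbu := (hT.reachable_deleteEdges_iff_not_reachable hab u).not_left.mp hau
    have hbw := (hT.reachable_deleteEdges_iff_not_reachable hab w).not_left.mp (h.not.mp hau)
    exact hbu.symm.trans hbw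

lemma IsAcyclic.mem_edges_iff_not_reachable_deleteEdges (hG : G.IsAcyclic) {u w : V}
    {p : G.Walk u w} (hp : p.IsPath) {e : Sym2 V} :
    e ∈ p.edges ↔ ¬ (G.deleteEdges {e}).Reachable u w := by
  classical
  refine ⟨fun he ⟨q⟩ ↦ ?_, p.mem_edges_of_not_reachable_deleteEdges⟩
  have hq := q.bypass_isPath.mapLe (deleteEdges_le {e})
  obtain rfl : p = q.bypass.mapLe (deleteEdges_le {e}) :=
    congrArg Subtype.val ((hG.subsingleton_path u w).elim ⟨p, hp⟩ ⟨_, hq⟩)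
  rw [Walk.edges_mapLe_eq_edges] at he
  simpa using q.bypass.edges_subset_edgeSet he

/-- The end of a longest path from `a` that avoids `b` is a leaf. -/
lemma IsAcyclic.exists_degree_eq_one_reachable_deleteEdges [Fintype V] [DecidableRel G.Adj]
    (hG : G.IsAcyclic) {a b : V} (hab : G.Adj a b) :
    ∃ x, G.degree x = 1 ∧ (G.deleteEdges {s(a, b)}).Reachable a x := by
  let lengths := {n | ∃ (x : V) (p : G.Walk a x), p.IsPath ∧ b ∉ p.support ∧ p.length = n}
  have hfin : lengths.Finite := (Set.finite_lt_nat (Fintype.card V)).subset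
    fun n ⟨_, p, hp, _, hn⟩ ↦ hn ▸ hp.length_lt
  obtain ⟨_, ⟨x, p, hp, hbp, rfl⟩, hmax⟩ :=
    hfin.exists_maximal ⟨0, a, .nil, .nil, by simpa using hab.ne.symm, rfl⟩
  have hq : (Walk.cons hab.symm p).IsPath := hp.cons hbp
  refine ⟨x, degree_eq_one_iff_existsUnique_adj.mpr ⟨_, (Walk.cons hab.symm p).adj_penultimate
    Walk.not_nil_cons |>.symm, fun y hxy ↦ hG.eq_penultimate_of_adj_end hq hxy ?_⟩,
    (p.toDeleteEdge _ fun h ↦ hbp (p.snd_mem_support_of_mem_edges h)).reachable⟩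
  by_contra hy
  have hyp : y ∉ p.support := fun h ↦ hy (by simp [h])
  have hyb : y ≠ b := fun h ↦ hy (by simp [h])
  simpa using hmax ⟨y, p.concat hxy, hp.concat hyp hxy, by simp [hbp, hyb.symm], rfl⟩

section Counting

variable [Fintype V] [DecidableEq V] [DecidableRel G.Adj]

lemma IsAcyclic.dist_eq_card_filter_not_reachable (hG : G.IsAcyclic) {u w : V}
    (huw : G.Reachable u w) :
    G.dist u w = #{e ∈ G.edgeFinset | ¬ (G.deleteEdges {e}).Reachable u w} := by
  obtain ⟨p, hp, hlen⟩ := huw.exists_path_of_dist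
  rw [← hlen, ← p.length_edges, ← List.toFinset_card_of_nodup hp.edges_nodup]
  congr 1
  ext e
  rw [List.mem_toFinset, mem_filter, mem_edgeFinset, hG.mem_edges_iff_not_reachable_deleteEdges hp]
  exact ⟨fun h ↦ ⟨p.edges_subset_edgeSet <| (hG.mem_edges_iff_not_reachable_deleteEdges hp).mpr h,
    h⟩, And.right⟩

lemma IsTree.sum_sum_dist_eq_sum_card_filter_not_reachable (hT : G.IsTree) (s : Finset V) :
    ∑ u ∈ s, ∑ w ∈ s, G.dist u w =
      ∑ e ∈ G.edgeFinset, #{x ∈ s ×ˢ s | ¬ (G.deleteEdges {e}).Reachable x.1 x.2} := by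
  simp_rw [fun u w ↦ hT.isAcyclic.dist_eq_card_filter_not_reachable (hT.connected u w),
    card_filter, sum_product]
  exact (sum_congr rfl fun _ _ ↦ sum_comm).trans sum_comm

lemma IsTree.card_filter_not_reachable_deleteEdges (hT : G.IsTree) {a b : V} (hab : G.Adj a b)
    (s : Finset V) :
    #{x ∈ s ×ˢ s | ¬ (G.deleteEdges {s(a, b)}).Reachable x.1 x.2} =
      2 * (#{x ∈ s | (G.deleteEdges {s(a, b)}).Reachable a x} *
        #{x ∈ s | ¬ (G.deleteEdges {s(a, b)}).Reachable a x}) := by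
  set R := (G.deleteEdges {s(a, b)}).Reachable a
  have hsep : {x ∈ s ×ˢ s | ¬ (G.deleteEdges {s(a, b)}).Reachable x.1 x.2} =
      {x ∈ s | R x} ×ˢ {x ∈ s | ¬ R x} ∪ {x ∈ s | ¬ R x} ×ˢ {x ∈ s | R x} := by
    ext ⟨u, w⟩
    simp only [mem_filter, mem_product, mem_union, hT.reachable_deleteEdges_iff hab u w]
    tauto
  rw [hsep, card_union_of_disjoint (disjoint_product.mpr (.inl (disjoint_filter_filter_not s s R))),
    card_product, card_product]
  ring

lemma IsTree.two_mul_card_pendentFinset_sub_one_le (hT : G.IsTree) {e : Sym2 V}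
    (he : e ∈ G.edgeSet) :
    2 * (#(pendentFinset G) - 1) ≤
      #{x ∈ pendentFinset G ×ˢ pendentFinset G | ¬ (G.deleteEdges {e}).Reachable x.1 x.2} := by
  induction e using Sym2.ind with | h a b => ?_
  rw [mem_edgeSet] at he
  obtain ⟨x, hx, hax⟩ := hT.isAcyclic.exists_degree_eq_one_reachable_deleteEdges he
  obtain ⟨y, hy, hby⟩ := hT.isAcyclic.exists_degree_eq_one_reachable_deleteEdges he.symm
  rw [Sym2.eq_swap, ← (hT.reachable_deleteEdges_iff_not_reachable he y).not_left] at hby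
  rw [hT.card_filter_not_reachable_deleteEdges he,
    ← card_filter_add_card_filter_not (s := pendentFinset G)
      ((G.deleteEdges {s(a, b)}).Reachable a)]
  refine Nat.mul_le_mul_left 2 (Nat.add_sub_one_le_mul ?_ ?_) <;> refine (card_pos.mpr ?_).ne'
  exacts [⟨x, by simp [pendentFinset, hx, hax]⟩, ⟨y, by simp [pendentFinset, hy, hby]⟩]

end Counting

lemma IsTree.card_sub_one_mul_le_terminalWienerIndex [Fintype V] [DecidableRel G.Adj]
    (hT : G.IsTree) :
    (Fintype.card V - 1) * (#(pendentFinset G) - 1) ≤ terminalWienerIndex G := by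
  classical
  rw [terminalWienerIndex, Nat.le_div_iff_mul_le two_pos,
    hT.sum_sum_dist_eq_sum_card_filter_not_reachable]
  calc (Fintype.card V - 1) * (#(pendentFinset G) - 1) * 2
      = ∑ e ∈ G.edgeFinset, 2 * (#(pendentFinset G) - 1) := by
        rw [sum_const, smul_eq_mul, ← hT.card_edgeFinset, Nat.add_sub_cancel]
        ring
    _ ≤ _ := sum_le_sum fun e he ↦ hT.two_mul_card_pendentFinset_sub_one_le (mem_edgeFinset.mp he)

lemma IsTree.sum_degree_sub_two [Fintype V] [DecidableRel G.Adj] (hT : G.IsTree) :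
    ∑ v, ((G.degree v : ℤ) - 2) = -2 := by
  classical
  rw [sum_sub_distrib, ← Nat.cast_sum, G.sum_degrees_eq_twice_card_edges, sum_const, card_univ,
    ← hT.card_edgeFinset]
  push_cast
  ring

lemma IsTree.degree_add_degree_le_card_pendentFinset_add_two [Fintype V] [DecidableRel G.Adj]
    (hT : G.IsTree) {u v : V} (huv : u ≠ v) (hu : 2 ≤ G.degree u) (hv : 2 ≤ G.degree v) :
    G.degree u + G.degree v ≤ #(pendentFinset G) + 2 := by
  classical
  have : Nontrivial V := ⟨u, v, huv⟩
  have hsplit : ∑ x ∈ pendentFinset G, ((G.degree x : ℤ) - 2) +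
      ∑ x ∈ univ.filter (G.degree · ≠ 1), ((G.degree x : ℤ) - 2) = ∑ x, ((G.degree x : ℤ) - 2) :=
    sum_filter_add_sum_filter_not univ _ _
  have hleaves : ∑ x ∈ pendentFinset G, ((G.degree x : ℤ) - 2) = -#(pendentFinset G) := by
    rw [sum_congr rfl fun x hx ↦ by rw [(mem_filter.mp hx).2]]
    simp
  have hpair : ((G.degree u : ℤ) - 2) + ((G.degree v : ℤ) - 2) ≤
      ∑ x ∈ univ.filter (G.degree · ≠ 1), ((G.degree x : ℤ) - 2) := by
    rw [← sum_pair (f := fun x ↦ (G.degree x : ℤ) - 2) huv]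
    refine sum_le_sum_of_subset_of_nonneg ?_ fun x hx _ ↦ ?_
    · intro x hx
      simp only [mem_insert, mem_singleton] at hx
      rcases hx with rfl | rfl <;> simp <;> omega
    · have hpos := hT.preconnected.degree_pos_of_nontrivial x
      have hne := (mem_filter.mp hx).2
      omega
  rw [hT.sum_degree_sub_two] at hsplit
  omega

end SimpleGraph

/-- If `T` is a tree on `n` vertices with maximum degree `Δ ≥ 3` such that
`TW(T) = (n - 1)(Δ - 1)`, then `T` is starlike: exactly one vertex of `T` has degree greater
than 2, and that vertex has degree `Δ`. -/
theorem starlike_of_terminal_wiener_index_eq {V : Type*} [Fintype V] (T : SimpleGraph V)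
    [DecidableRel T.Adj] (hT : T.IsTree) (hΔ : 3 ≤ T.maxDegree)
    (heq : terminalWienerIndex T = (Fintype.card V - 1) * (T.maxDegree - 1)) :
    ∃ v : V, T.degree v = T.maxDegree ∧ 2 < T.degree v ∧ ∀ u : V, 2 < T.degree u → u = v := by
  have : Nonempty V := hT.connected.nonempty
  obtain ⟨v, hv⟩ := T.exists_maximal_degree_vertex
  refine ⟨v, hv.symm, by omega, fun u hu ↦ by_contra fun huv ↦ ?_⟩
  have hdeg := hT.degree_add_degree_le_card_pendentFinset_add_two huv hu.le (by omega)
  have hn : 2 ≤ Fintype.card V := Fintype.one_lt_card_iff_nontrivial.mpr ⟨u, v, huv⟩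
  have hTW := heq ▸ hT.card_sub_one_mul_le_terminalWienerIndex
  have hleaves := Nat.le_of_mul_le_mul_left hTW (by omega)
  omega
end
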